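/- arXiv:1601.06435 — 2 statements merged into one kernel-verified Lean document; each statement's English description precedes it below -/
import Mathlib

section
/- Let Y be a subshift and 1 ≤ α < β. If 0 < ℓ_β < ∞ (i.e., Y is β-repulsive), then ℓ_α = 0. -/
open Filter Topology MeasureTheory

namespace CFPaper

/-- Continued fraction denominators: `q 0 = 1`, `q 1 = a 1`, `q (n+2) = a (n+2) * q (n+1) + q n`. -/
def cfQ (a : ℕ → ℕ) : ℕ → ℕ
  | 0 => 1
  | 1 => a 1
  | (n+2) => a (n+2) * cfQ a (n+1) + cfQ a n

/-- Continued fraction numerators. -/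
def cfP (a : ℕ → ℕ) : ℕ → ℕ
  | 0 => 0
  | 1 => 1
  | (n+2) => a (n+2) * cfP a (n+1) + cfP a n

/-- `q_{n-1}` with the convention `q_{-1} = 0`. -/
def qext (a : ℕ → ℕ) : ℕ → ℕ
  | 0 => 0
  | (n+1) => cfQ a n

/-- `p_{n-1}` with the convention `p_{-1} = 1`. -/
def pext (a : ℕ → ℕ) : ℕ → ℕ
  | 0 => 1
  | (n+1) => cfP a n

/-- `a` (with `a 1, a 2, …` relevant) is the continued fraction expansion of the
irrational `θ`: all entries are positive and the convergents tend to `θ`. -/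
def IsCF (θ : ℝ) (a : ℕ → ℕ) : Prop :=
  Irrational θ ∧ (∀ n, 1 ≤ n → 1 ≤ a n) ∧
    Tendsto (fun n => (cfP a n : ℝ) / (cfQ a n : ℝ)) atTop (nhds θ)

/-- `A_α(θ) = limsup_n a_n q_{n-1}^{1-α}` (valued in `ℝ≥0∞`). -/
noncomputable def Acf (a : ℕ → ℕ) (α : ℝ) : ENNReal :=
  Filter.limsup (fun n => (a (n+1) : ENNReal) * (cfQ a n : ENNReal) ^ (1 - α)) atTop

/-- The left shift on infinite binary sequences. -/
def shiftMap (x : ℕ → Bool) : ℕ → Bool := fun n => x (n+1)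

/-- A subshift: a closed shift-invariant subset of `{0,1}^ℕ`. -/
def IsSubshift (Y : Set (ℕ → Bool)) : Prop := IsClosed Y ∧ shiftMap '' Y = Y

/-- The language of `Y`: all finite factors of elements of `Y`. -/
def Lang (Y : Set (ℕ → Bool)) : Set (List Bool) :=
  {w | ∃ x ∈ Y, ∃ k, w = (List.range w.length).map fun i => x (k + i)}

/-- The rotation sequence of slope `θ`: `x n = ⌈θ(n+1)⌉ - ⌈θ n⌉` (as a boolean, `true` = 1). -/
noncomputable def rotWord (θ : ℝ) : ℕ → Bool :=
  fun n => if ⌈θ * ((n : ℝ)+1)⌉ - ⌈θ * (n : ℝ)⌉ = 1 then true else false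

/-- The Sturmian subshift of slope `θ`: orbit closure of the rotation sequence. -/
noncomputable def sturmian (θ : ℝ) : Set (ℕ → Bool) :=
  closure {x | ∃ k, x = shiftMap^[k] (rotWord θ)}

/-- `w` is a nonempty proper prefix and suffix of `W`, both in the language of `Y`. -/
def PSPair (Y : Set (ℕ → Bool)) (w W : List Bool) : Prop :=
  w ∈ Lang Y ∧ W ∈ Lang Y ∧ w <+: W ∧ w <:+ W ∧ W ≠ w ∧ w ≠ []

/-- `A_{α,n}`: infimum of `(|W|-|w|)/|w|^{1/α}` over admissible pairs with `|W| = n`. -/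
noncomputable def repA (Y : Set (ℕ → Bool)) (α : ℝ) (n : ℕ) : ENNReal :=
  sInf {r | ∃ w W, PSPair Y w W ∧ W.length = n ∧
    r = ((W.length - w.length : ℕ) : ENNReal) / ((w.length : ENNReal) ^ (1/α))}

/-- `ℓ_α = liminf_n A_{α,n}`. -/
noncomputable def ellCf (Y : Set (ℕ → Bool)) (α : ℝ) : ENNReal :=
  Filter.liminf (repA Y α) atTop

/-- `ℓ`: infimum of `(|W|-|w|)/|w|` over all admissible pairs; `Y` is repulsive if `ℓ > 0`. -/
noncomputable def ellRep (Y : Set (ℕ → Bool)) : ENNReal :=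
  sInf {r | ∃ w W, PSPair Y w W ∧
    r = ((W.length - w.length : ℕ) : ENNReal) / (w.length : ENNReal)}

/-- The repetitive function: `repFun Y r` is the least `r'` such that every word of
length `r'` in the language contains every word of length `r` as a factor. -/
noncomputable def repFun (Y : Set (ℕ → Bool)) (r : ℕ) : ℕ :=
  sInf {r' | ∀ W ∈ Lang Y, W.length = r' → ∀ w ∈ Lang Y, w.length = r → w <:+: W}

/-- `R_α = limsup_n R(n)/n^α`. -/
noncomputable def Ralpha (Y : Set (ℕ → Bool)) (α : ℝ) : ENNReal :=
  Filter.limsup (fun n => (repFun Y n : ENNReal) / (n : ENNReal) ^ α) atTop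

/-- `Q(n)`: the supremum of powers `p` such that some word of length `n` has `W^p` in the language. -/
noncomputable def Qfun (Y : Set (ℕ → Bool)) (n : ℕ) : ENNReal :=
  sSup {x | ∃ p : ℕ, x = (p : ENNReal) ∧ ∃ W ∈ Lang Y,
    W.length = n ∧ (List.replicate p W).flatten ∈ Lang Y}

/-- `Q_α = limsup_n Q(n)/n^{α-1}`. -/
noncomputable def Qalpha (Y : Set (ℕ → Bool)) (α : ℝ) : ENNReal :=
  Filter.limsup (fun n => Qfun Y n / (n : ENNReal) ^ (α - 1)) atTop

/-- The Jarník set `J_β^c`. -/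
def Jarnik (β c : ℝ) : Set ℝ :=
  {x | x ∈ Set.Icc (0:ℝ) 1 ∧
    {pq : ℕ × ℕ | 0 < pq.2 ∧ |x - (pq.1 : ℝ)/(pq.2 : ℝ)| ≤ c * (pq.2 : ℝ) ^ (-β)}.Infinite}

/-- The exact Jarník set `Exact(β)`. -/
def ExactSet (β : ℝ) : Set ℝ :=
  Jarnik β 1 \ ⋃ n ∈ {n : ℕ | 2 ≤ n}, Jarnik β ((n : ℝ)/((n : ℝ)+1))

/-- The substitution `τ` : `0 ↦ 0`, `1 ↦ 10`. -/
def tauW (w : List Bool) : List Bool := w.flatMap fun b => if b then [true, false] else [false]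

/-- The substitution `ρ` : `0 ↦ 01`, `1 ↦ 1`. -/
def rhoW (w : List Bool) : List Bool := w.flatMap fun b => if b then [true] else [false, true]

/-- The composition `τ^{a₁} ∘ ρ^{a₂} ∘ ⋯ ∘ τ^{a_{2k-1}} ∘ ρ^{a_{2k}}`. -/
def stageW (a : ℕ → ℕ) : ℕ → List Bool → List Bool
  | 0 => id
  | (k+1) => stageW a k ∘ tauW^[a (2*k+1)] ∘ rhoW^[a (2*k+2)]

/-- The word `R_k`. -/
def Rw (a : ℕ → ℕ) (k : ℕ) : List Bool := stageW a k [false]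

/-- The word `L_k`. -/
def Lw (a : ℕ → ℕ) (k : ℕ) : List Bool := stageW a k [true]

/-- Best rational approximation of the first kind. -/
def IsBestApprox (θ : ℝ) (p q : ℕ) : Prop :=
  0 < q ∧ Nat.Coprime p q ∧
    ∀ p' q' : ℕ, 0 < q' → q' < q → |θ - (p : ℝ)/(q : ℝ)| < |θ - (p' : ℝ)/(q' : ℝ)|

/-- The double sum `Σ_{k ≥ m} Σ_{j=1}^{a_{k+1}} (j q_k + q_{k-1})^{-t}` (valued in `ℝ≥0∞`). -/
noncomputable def dblSum (a : ℕ → ℕ) (t : ℝ) (m : ℕ) : ENNReal :=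
  ∑' k : ℕ, if m ≤ k then
    ∑ j ∈ Finset.Icc 1 (a (k+1)), ((j * cfQ a k + qext a k : ℕ) : ENNReal) ^ (-t)
  else 0

end CFPaper

/-!
If `ℓ_β < C < ∞`, then for infinitely many `n` there is a pair `(W, w)` with `|W| = n` and
`d := |W| - |w| < C |w|^{1/β}`. Since `n = d + |w|`, this forces `|w| → ∞` along these `n`, and
`d / |w|^{1/α} = (d / |w|^{1/β}) |w|^{1/β - 1/α} < C |w|^{1/β - 1/α} → 0` because `α < β`.
-/

namespace ENNReal

theorem div_rpow_eq_div_rpow_mul_rpow_sub {m : ℝ≥0∞} (d : ℝ≥0∞) (s t : ℝ) (h0 : m ≠ 0)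
    (htop : m ≠ ⊤) : d / m ^ s = d / m ^ t * m ^ (t - s) := by
  have hinv : (m ^ s)⁻¹ = (m ^ t)⁻¹ * m ^ (t - s) := by
    rw [← rpow_neg, ← rpow_neg, ← rpow_add _ _ h0 htop]
    ring_nf
  rw [ENNReal.div_eq_inv_mul, ENNReal.div_eq_inv_mul, hinv, mul_assoc, mul_comm (m ^ (t - s)),
    ← mul_assoc]

theorem tendsto_const_mul_natCast_rpow_of_neg {C : ℝ≥0∞} (hC : C ≠ ⊤) {r : ℝ} (hr : r < 0) :
    Tendsto (fun m : ℕ => C * (m : ℝ≥0∞) ^ r) atTop (𝓝 0) := by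
  have hpow : Tendsto (fun m : ℕ => (m : ℝ≥0∞) ^ r) atTop (𝓝 0) := by
    have hinv (m : ℕ) : (m : ℝ≥0∞) ^ r = ((m : ℝ≥0∞) ^ (-r))⁻¹ := by rw [← rpow_neg, neg_neg]
    simp_rw [hinv, ← inv_top]
    exact tendsto_inv_iff.2 ((tendsto_rpow_at_top (neg_pos.2 hr)).comp tendsto_nat_nhds_top)
  simpa using Tendsto.const_mul hpow (Or.inr hC)

theorem exists_le_of_le_mul_rpow {C : ℝ≥0∞} (hC : C ≠ ⊤) {t : ℝ} (ht : 0 ≤ t) (M : ℕ) :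
    ∃ N : ℕ, ∀ d m : ℕ, (d : ℝ≥0∞) ≤ C * (m : ℝ≥0∞) ^ t → N ≤ d + m → M ≤ m := by
  set B := C * (M : ℝ≥0∞) ^ t
  have hB : B ≠ ⊤ := mul_ne_top hC (rpow_ne_top_of_nonneg ht (natCast_ne_top M))
  refine ⟨⌈B.toReal⌉₊ + M, fun d m hd hN => ?_⟩
  by_contra! hmM
  have hdB : (d : ℝ≥0∞) ≤ B :=
    hd.trans (mul_le_mul_right (rpow_le_rpow (by exact_mod_cast hmM.le) ht) C)
  have hd_ceil : d ≤ ⌈B.toReal⌉₊ := by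
    exact_mod_cast (by simpa using toReal_mono hB hdB : (d : ℝ) ≤ B.toReal).trans (Nat.le_ceil _)
  omega

end ENNReal

open ENNReal

namespace CFPaper

variable {Y : Set (ℕ → Bool)} {w W : List Bool}

theorem PSPair.length_pos (h : PSPair Y w W) : 0 < w.length :=
  List.length_pos_iff.2 h.2.2.2.2.2

theorem PSPair.length_lt (h : PSPair Y w W) : w.length < W.length :=
  h.2.2.1.length_le.lt_of_ne fun hlen => h.2.2.2.2.1 (h.2.2.1.eq_of_length hlen).symm

theorem repA_le (h : PSPair Y w W) (α : ℝ) :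
    repA Y α W.length ≤ ((W.length - w.length : ℕ) : ℝ≥0∞) / (w.length : ℝ≥0∞) ^ (1 / α) :=
  sInf_le ⟨w, W, h, rfl, rfl⟩

theorem exists_repA_le_of_repA_lt {α β : ℝ} {C : ℝ≥0∞} {n : ℕ} (h : repA Y β n < C) :
    ∃ d m : ℕ, d + m = n ∧ (d : ℝ≥0∞) ≤ C * (m : ℝ≥0∞) ^ (1 / β) ∧
      repA Y α n ≤ C * (m : ℝ≥0∞) ^ (1 / β - 1 / α) := by
  obtain ⟨_, ⟨w, W, hp, rfl, rfl⟩, hlt⟩ := sInf_lt_iff.1 h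
  have hm0 : (w.length : ℝ≥0∞) ≠ 0 := by exact_mod_cast hp.length_pos.ne'
  have hmtop : (w.length : ℝ≥0∞) ≠ ⊤ := natCast_ne_top _
  have hd : ((W.length - w.length : ℕ) : ℝ≥0∞) ≤ C * (w.length : ℝ≥0∞) ^ (1 / β) :=
    (ENNReal.div_lt_iff (Or.inl (rpow_pos (pos_iff_ne_zero.2 hm0) hmtop).ne') (Or.inr
      (natCast_ne_top _))).1 hlt |>.le
  refine ⟨_, w.length, Nat.sub_add_cancel hp.length_lt.le, hd, ?_⟩
  calc repA Y α W.length
      ≤ ((W.length - w.length : ℕ) : ℝ≥0∞) / (w.length : ℝ≥0∞) ^ (1 / α) := repA_le hp α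
    _ = ((W.length - w.length : ℕ) : ℝ≥0∞) / (w.length : ℝ≥0∞) ^ (1 / β) *
          (w.length : ℝ≥0∞) ^ (1 / β - 1 / α) :=
        div_rpow_eq_div_rpow_mul_rpow_sub _ _ _ hm0 hmtop
    _ ≤ C * (w.length : ℝ≥0∞) ^ (1 / β - 1 / α) := mul_le_mul_left (div_le_of_le_mul hd) _

theorem stmt6_general (Y : Set (ℕ → Bool)) (α β : ℝ)
    (h1 : 1 ≤ α) (hab : α < β)
    (hβ : 0 < ellCf Y β ∧ ellCf Y β < ⊤) :
    ellCf Y α = 0 := by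
  set C := ellCf Y β + 1
  have hC : C ≠ ⊤ := add_ne_top.2 ⟨hβ.2.ne, one_ne_top⟩
  have hfreq : ∃ᶠ n in atTop, repA Y β n < C :=
    frequently_lt_of_liminf_lt (by isBoundedDefault) (lt_add_right hβ.2.ne one_ne_zero)
  have hα : 0 < α := one_pos.trans_le h1
  have hexp : 1 / β - 1 / α < 0 := sub_neg.2 (one_div_lt_one_div_of_lt hα hab)
  refine nonpos_iff_eq_zero.1 (le_of_forall_gt_imp_ge_of_dense fun ε hε => ?_)
  obtain ⟨M, hM⟩ :=
    eventually_atTop.1 ((tendsto_const_mul_natCast_rpow_of_neg hC hexp).eventually_lt_const hε)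
  obtain ⟨N, hN⟩ := exists_le_of_le_mul_rpow hC (one_div_nonneg.2 (hα.trans hab).le) M
  refine liminf_le_of_frequently_le' ((hfreq.and_eventually (eventually_ge_atTop N)).mono ?_)
  rintro n ⟨hlt, hNn⟩
  obtain ⟨d, m, rfl, hd, hrep⟩ := exists_repA_le_of_repA_lt (α := α) hlt
  exact hrep.trans (hM m (hN d m hd hNn)).le

/-- if `1 ≤ α < β` and `Y` is β-repulsive, then `ℓ_α = 0`. -/
theorem stmt6 (Y : Set (ℕ → Bool)) (hY : IsSubshift Y) (α β : ℝ)
    (h1 : 1 ≤ α) (hab : α < β)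
    (hpairs : ∀ N : ℕ, ∃ n, N ≤ n ∧ ∃ w W, PSPair Y w W ∧ W.length = n)
    (hβ : 0 < ellCf Y β ∧ ellCf Y β < ⊤) :
    ellCf Y α = 0 :=
  stmt6_general Y α β h1 hab hβ

end CFPaper
end

section
/- Let θ ∈ [0,1] be irrational with A_α(θ) < ∞ for some α > 1, i.e., there is c > 1 with a_{m+1} ≤ c q_m^{α−1} for all m. Then the Sturmian subshift of slope θ is α-repetitive: 0 < R_α = limsup_{n→∞} R(n)/n^α < ∞; moreover R_α ≥ A_α(θ) and R(n) ≤ (2c+3) n^α for all n, provided A_α(θ) > 0 for the lower bound. -/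
open Filter Topology MeasureTheory

namespace CFPaper

/-!
The rotation word codes the orbit `x_m = {-mθ}` of the rotation by `θ` through the partition
`[0, θ) ∪ [θ, 1)` of the circle, and its factors of length `n` correspond to the arcs cut out by
the points `{jθ}`, `j ≤ n`. For `n < q_{k+1}` these cut points are `δ_k`-separated, where
`δ_k = |q_k θ - p_k|`, while any `q_{k+1} + q_k` consecutive orbit points are `δ_k`-dense. Hence
every factor of length `n` occurs in every window of length `q_{k+1} + q_k + n`, which together
with `a_{k+1} ≤ c q_k^{α-1}` gives `R(n) ≤ (2c + 3) n^α`. Conversely, the positions where the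
period `q_k` breaks come in clusters about `q_{k+1}` apart, so a `q_k`-periodic stretch of length
about `q_{k+1} + q_k` misses the factor of length `q_k + 1` at a break. Thus
`R(q_k + 1) ≥ a_{k+1} q_k`, and `R_α ≥ A_α(θ)` follows since `q_k + 1 ~ q_k`.
-/

section ContinuedFraction

variable {a : ℕ → ℕ}

theorem cfQ_add_two (n : ℕ) : cfQ a (n + 2) = a (n + 2) * cfQ a (n + 1) + cfQ a n := rfl

theorem cfQ_succ_eq (n : ℕ) : cfQ a (n + 1) = a (n + 1) * cfQ a n + qext a n := by
  cases n <;> simp [cfQ, qext]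

theorem cfQ_pos (ha : ∀ n, 1 ≤ n → 1 ≤ a n) (n : ℕ) : 0 < cfQ a n := by
  induction n using Nat.twoStepInduction with
  | zero => simp [cfQ]
  | one => exact ha 1 le_rfl
  | more n _ ih => rw [cfQ_add_two]; positivity

theorem cfQ_le_cfQ_succ (ha : ∀ n, 1 ≤ n → 1 ≤ a n) (n : ℕ) : cfQ a n ≤ cfQ a (n + 1) := by
  rw [cfQ_succ_eq]
  cases n with
  | zero => simpa [cfQ, qext] using ha 1 le_rfl
  | succ n => nlinarith [ha (n + 2) (by omega)]

theorem cfQ_monotone (ha : ∀ n, 1 ≤ n → 1 ≤ a n) : Monotone (cfQ a) :=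
  monotone_nat_of_le_succ (cfQ_le_cfQ_succ ha)

theorem cfQ_lt_cfQ_succ (ha : ∀ n, 1 ≤ n → 1 ≤ a n) {n : ℕ} (hn : 1 ≤ n) :
    cfQ a n < cfQ a (n + 1) := by
  obtain ⟨m, rfl⟩ := Nat.exists_eq_add_of_le' hn
  rw [cfQ_add_two]
  nlinarith [ha (m + 2) (by omega), cfQ_pos ha m]

theorem le_cfQ_succ (ha : ∀ n, 1 ≤ n → 1 ≤ a n) (n : ℕ) : n ≤ cfQ a (n + 1) := by
  induction n with
  | zero => exact Nat.zero_le _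
  | succ n ih => exact ih.trans_lt (cfQ_lt_cfQ_succ ha (Nat.le_add_left 1 n))

theorem tendsto_cfQ_atTop (ha : ∀ n, 1 ≤ n → 1 ≤ a n) : Tendsto (cfQ a) atTop atTop :=
  tendsto_atTop_atTop.2 fun b => ⟨b + 1, fun _ hn => (le_cfQ_succ ha b).trans (cfQ_monotone ha hn)⟩

theorem qext_le_cfQ (ha : ∀ n, 1 ≤ n → 1 ≤ a n) (n : ℕ) : qext a n ≤ cfQ a n := by
  cases n with
  | zero => exact Nat.zero_le _
  | succ n => exact cfQ_le_cfQ_succ ha n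

theorem cfP_mul_cfQ_sub (n : ℕ) :
    (cfP a (n + 1) : ℤ) * cfQ a n - cfP a n * cfQ a (n + 1) = (-1) ^ n := by
  induction n with
  | zero => simp [cfP, cfQ]
  | succ n ih =>
    simp only [cfP, cfQ, Nat.cast_add, Nat.cast_mul] at ih ⊢
    linear_combination (-1 : ℤ) * ih

theorem cfP_mul_cfQ_sub_two (n : ℕ) :
    (cfP a (n + 2) : ℤ) * cfQ a n - cfP a n * cfQ a (n + 2) = (-1) ^ n * a (n + 2) := by
  simp only [cfP, cfQ, Nat.cast_add, Nat.cast_mul]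
  linear_combination (a (n + 2) : ℤ) * cfP_mul_cfQ_sub (a := a) n

end ContinuedFraction

section Approximation

variable {θ : ℝ} {a : ℕ → ℕ}

noncomputable def cfErr (θ : ℝ) (a : ℕ → ℕ) (n : ℕ) : ℝ := cfQ a n * θ - cfP a n

/-- `δ_n = |q_n θ - p_n|`, written with the sign `(-1)^n` by which the convergents alternate
around `θ` (`cfDelta_pos`). -/
noncomputable def cfDelta (θ : ℝ) (a : ℕ → ℕ) (n : ℕ) : ℝ := (-1) ^ n * cfErr θ a n

theorem cfErr_eq (n : ℕ) : cfErr θ a n = (-1) ^ n * cfDelta θ a n := by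
  rw [cfDelta, ← mul_assoc, ← pow_add, Even.neg_one_pow ⟨n, rfl⟩, one_mul]

theorem cfDelta_zero : cfDelta θ a 0 = θ := by
  simp [cfDelta, cfErr, cfQ, cfP]

theorem cfDelta_add_two (n : ℕ) :
    cfDelta θ a (n + 2) = cfDelta θ a n - a (n + 2) * cfDelta θ a (n + 1) := by
  simp only [cfDelta, cfErr, cfQ, cfP, Nat.cast_add, Nat.cast_mul, pow_succ]
  ring

theorem cfQ_mul_cfDelta_add (n : ℕ) :
    (cfQ a (n + 1) : ℝ) * cfDelta θ a n + cfQ a n * cfDelta θ a (n + 1) = 1 := by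
  have hdet : ((cfP a (n + 1) : ℤ) * cfQ a n - cfP a n * cfQ a (n + 1) : ℝ) = (-1) ^ n := by
    exact_mod_cast cfP_mul_cfQ_sub n
  have hsq : ((-1 : ℝ) ^ n) ^ 2 = 1 := by rw [← pow_mul, Even.neg_one_pow ⟨n, by ring⟩]
  simp only [cfDelta, cfErr, pow_succ]
  linear_combination (-1 : ℝ) ^ n * hdet + hsq

theorem neg_one_pow_mul_convergent_lt (ha : ∀ n, 1 ≤ n → 1 ≤ a n) (m : ℕ) :
    (-1) ^ m * ((cfP a m : ℝ) / cfQ a m) < (-1) ^ m * ((cfP a (m + 2) : ℝ) / cfQ a (m + 2)) := by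
  have hq : (0 : ℝ) < cfQ a m := by exact_mod_cast cfQ_pos ha m
  have hq₂ : (0 : ℝ) < cfQ a (m + 2) := by exact_mod_cast cfQ_pos ha (m + 2)
  have ha₂ : (0 : ℝ) < a (m + 2) := by exact_mod_cast ha (m + 2) (by omega)
  have hdet : (cfP a (m + 2) : ℝ) * cfQ a m - cfQ a (m + 2) * cfP a m = (-1) ^ m * a (m + 2) := by
    rw [mul_comm (cfQ a (m + 2) : ℝ)]
    exact_mod_cast cfP_mul_cfQ_sub_two m
  rw [← sub_pos, ← mul_sub, div_sub_div _ _ hq₂.ne' hq.ne', hdet, ← mul_div_assoc, ← mul_assoc,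
    ← pow_add, Even.neg_one_pow ⟨m, rfl⟩, one_mul]
  positivity

theorem cfDelta_pos (hcf : IsCF θ a) (n : ℕ) : 0 < cfDelta θ a n := by
  set s : ℕ → ℝ := fun k => (-1) ^ n * ((cfP a (n + 2 * k) : ℝ) / cfQ a (n + 2 * k))
  have hs : StrictMono s := strictMono_nat_of_lt_succ fun k => by
    have h := neg_one_pow_mul_convergent_lt hcf.2.1 (n + 2 * k)
    rwa [pow_add, pow_mul, neg_one_sq, one_pow, mul_one, add_assoc, ← mul_add_one] at h
  have hlim : Tendsto s atTop (𝓝 ((-1) ^ n * θ)) :=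
    (hcf.2.2.comp (tendsto_atTop_atTop.2 fun b => ⟨b, fun k hk => by omega⟩)).const_mul _
  have hlt : s 0 < (-1) ^ n * θ := (hs zero_lt_one).trans_le (hs.monotone.ge_of_tendsto hlim 1)
  have hq : (0 : ℝ) < cfQ a n := by exact_mod_cast cfQ_pos hcf.2.1 n
  have hδ : cfDelta θ a n = cfQ a n * ((-1) ^ n * θ - s 0) := by
    simp only [s, cfDelta, cfErr, mul_zero, add_zero]
    field_simp
  rw [hδ]
  exact mul_pos hq (sub_pos.2 hlt)

theorem cfDelta_succ_lt (hcf : IsCF θ a) (n : ℕ) : cfDelta θ a (n + 1) < cfDelta θ a n := by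
  have h := cfDelta_add_two (θ := θ) (a := a) n
  have ha : (1 : ℝ) ≤ a (n + 2) := by exact_mod_cast hcf.2.1 (n + 2) (by omega)
  nlinarith [cfDelta_pos hcf (n + 1), cfDelta_pos hcf (n + 2)]

theorem cfDelta_antitone (hcf : IsCF θ a) : Antitone (cfDelta θ a) :=
  antitone_nat_of_succ_le fun n => (cfDelta_succ_lt hcf n).le

theorem IsCF.pos (hcf : IsCF θ a) : 0 < θ :=
  cfDelta_zero (θ := θ) (a := a) ▸ cfDelta_pos hcf 0

theorem cfDelta_le (hcf : IsCF θ a) (n : ℕ) : cfDelta θ a n ≤ θ :=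
  (cfDelta_antitone hcf (Nat.zero_le n)).trans_eq cfDelta_zero

theorem add_cfDelta_le_one (hcf : IsCF θ a) {n : ℕ} (hn : 1 ≤ n) : θ + cfDelta θ a n ≤ 1 := by
  have h := cfQ_mul_cfDelta_add (θ := θ) (a := a) 0
  have hq : (1 : ℝ) ≤ cfQ a 1 := by exact_mod_cast cfQ_pos hcf.2.1 1
  simp only [cfDelta_zero, cfQ, Nat.cast_one, one_mul] at h hq
  nlinarith [cfDelta_antitone hcf hn, hcf.pos]

theorem IsCF.lt_one (hcf : IsCF θ a) : θ < 1 := by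
  linarith [add_cfDelta_le_one hcf le_rfl, cfDelta_pos hcf 1]

theorem exists_cfQ_cfP_coords (n : ℕ) (d p : ℤ) :
    ∃ x y : ℤ, x * cfQ a n + y * cfQ a (n + 1) = d ∧ x * cfP a n + y * cfP a (n + 1) = p := by
  have hdet := cfP_mul_cfQ_sub (a := a) n
  have hsq : ((-1 : ℤ) ^ n) ^ 2 = 1 := by rw [← pow_mul, Even.neg_one_pow ⟨n, by ring⟩]
  refine ⟨(-1) ^ n * (d * cfP a (n + 1) - p * cfQ a (n + 1)),
    (-1) ^ n * (p * cfQ a n - d * cfP a n), ?_, ?_⟩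
  · linear_combination ((-1) ^ n * d) * hdet + d * hsq
  · linear_combination ((-1) ^ n * p) * hdet + p * hsq

theorem le_abs_mul_sub_mul {x y : ℤ} {u v : ℝ} (hx : x ≠ 0) (hxy : x * y ≤ 0) (hu : 0 ≤ u)
    (hv : 0 ≤ v) : u ≤ |x * u - y * v| := by
  rcases hx.lt_or_gt with hx | hx
  · have hy : (0 : ℝ) ≤ y := by exact_mod_cast nonneg_of_mul_nonpos_right hxy hx
    have hx : (x : ℝ) ≤ -1 := by exact_mod_cast Int.le_sub_one_of_lt hx
    exact le_abs.2 (Or.inr (by nlinarith))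
  · have hy : (y : ℝ) ≤ 0 := by exact_mod_cast nonpos_of_mul_nonpos_right hxy hx
    have hx : (1 : ℝ) ≤ x := by exact_mod_cast hx
    exact le_abs.2 (Or.inl (by nlinarith))

/-- Best approximation. Writing `d = x q_n + y q_{n+1}` forces `x ≠ 0` and `x y ≤ 0`, so
`|d θ - p| = |x| δ_n + |y| δ_{n+1}`. -/
theorem cfDelta_le_abs_sub (hcf : IsCF θ a) {n : ℕ} {d : ℤ} (p : ℤ) (hd : d ≠ 0)
    (hdq : |d| < cfQ a (n + 1)) : cfDelta θ a n ≤ |d * θ - p| := by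
  obtain ⟨x, y, hxd, hyp⟩ := exists_cfQ_cfP_coords (a := a) n d p
  have hq : (0 : ℤ) < cfQ a n := by exact_mod_cast cfQ_pos hcf.2.1 n
  obtain ⟨hdq₁, hdq₂⟩ := abs_lt.1 hdq
  have hx : x ≠ 0 := by
    rintro rfl
    rcases lt_trichotomy y 0 with hy | rfl | hy
    · nlinarith
    · exact hd (by simpa using hxd.symm)
    · nlinarith
  have hxy : x * y ≤ 0 := by
    by_contra! hxy
    rcases lt_trichotomy x 0 with hx' | rfl | hx'
    · nlinarith [neg_of_mul_pos_right hxy hx'.le]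
    · simp at hxy
    · nlinarith [pos_of_mul_pos_right hxy hx'.le]
  have herr : (d : ℝ) * θ - p = x * cfErr θ a n + y * cfErr θ a (n + 1) := by
    have hxd' : (x : ℝ) * cfQ a n + y * cfQ a (n + 1) = d := by exact_mod_cast hxd
    have hyp' : (x : ℝ) * cfP a n + y * cfP a (n + 1) = p := by exact_mod_cast hyp
    rw [← hxd', ← hyp', cfErr, cfErr]
    ring
  have hsign : (d : ℝ) * θ - p = (-1) ^ n * (x * cfDelta θ a n - y * cfDelta θ a (n + 1)) := by
    rw [herr, cfErr_eq, cfErr_eq, pow_succ]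
    ring
  rw [hsign, abs_mul, abs_pow, abs_neg, abs_one, one_pow, one_mul]
  exact le_abs_mul_sub_mul hx hxy (cfDelta_pos hcf n).le (cfDelta_pos hcf (n + 1)).le

end Approximation

section Covering

variable {θ : ℝ} {a : ℕ → ℕ}

theorem fract_fract_sub (x t : ℝ) : Int.fract (Int.fract x - t) = Int.fract (x - t) :=
  Int.fract_eq_fract.2 ⟨-⌊x⌋, by rw [Int.fract]; push_cast; ring⟩

theorem fract_eq_add_one {z : ℝ} (h₁ : -1 ≤ z) (h₂ : z < 0) : Int.fract z = z + 1 :=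
  Int.fract_eq_iff.2 ⟨by linarith, by linarith, -1, by push_cast; ring⟩

theorem fract_le_self {z : ℝ} (hz : 0 ≤ z) : Int.fract z ≤ z :=
  sub_le_self _ (Int.cast_nonneg (Int.floor_nonneg.2 hz))

theorem exists_le_fract_sub_mul_lt {y η : ℝ} {A : ℕ} (hy₀ : 0 ≤ y) (hη : 0 < η)
    (hyA : y < (A + 1) * η) : ∃ j ≤ A, Int.fract (y - j * η) < η := by
  have hq : 0 ≤ y / η := div_nonneg hy₀ hη.le
  refine ⟨⌊y / η⌋₊, Nat.lt_succ_iff.1 ((Nat.floor_lt hq).2 ?_), ?_⟩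
  · rw [div_lt_iff₀ hη]; exact_mod_cast hyA
  · have hle : (⌊y / η⌋₊ : ℝ) * η ≤ y := (le_div_iff₀ hη).1 (Nat.floor_le hq)
    have hlt : y < (⌊y / η⌋₊ + 1) * η := (div_lt_iff₀ hη).1 (Nat.lt_floor_add_one _)
    exact (fract_le_self (by linarith)).trans_lt (by linarith)

theorem exists_le_fract_add_mul_lt {y η : ℝ} {A : ℕ} (hy₁ : y < 1) (hη : 0 < η)
    (hyA : 1 - A * η ≤ y) : ∃ j ≤ A, Int.fract (y + j * η) < η := by
  have hq : 0 ≤ (1 - y) / η := div_nonneg (by linarith) hη.le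
  refine ⟨⌈(1 - y) / η⌉₊, Nat.ceil_le.2 ((div_le_iff₀ hη).2 (by linarith)), ?_⟩
  have hle : 1 - y ≤ ⌈(1 - y) / η⌉₊ * η := (div_le_iff₀ hη).1 (Nat.le_ceil _)
  have hlt : (⌈(1 - y) / η⌉₊ : ℝ) * η < 1 - y + η := by
    have := (Nat.ceil_lt_add_one hq)
    rw [← sub_lt_iff_lt_add, lt_div_iff₀ hη] at this
    linarith
  rw [← Int.fract_sub_one]
  exact (fract_le_self (by linarith)).trans_lt (by linarith)

/-- `Covers θ ε N`: every arc `(w - ε, w]` of the circle `ℝ/ℤ` contains one of the points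
`m θ`, `m < N`. -/
def Covers (θ ε : ℝ) (N : ℕ) : Prop := ∀ w : ℝ, ∃ m < N, Int.fract (w - m * θ) < ε

theorem fract_sub_mul_add_cfQ_mul (w : ℝ) (m j n : ℕ) :
    Int.fract (w - ((m + j * cfQ a n : ℕ) : ℝ) * θ)
      = Int.fract (Int.fract (w - m * θ) - j * cfErr θ a n) := by
  rw [fract_fract_sub, cfErr, ← Int.fract_add_intCast _ ((j * cfP a n : ℕ) : ℤ)]
  push_cast
  ring_nf

theorem covers_zero (hcf : IsCF θ a) : Covers θ (cfDelta θ a 0) (cfQ a 1 + cfQ a 0) := by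
  intro w
  have h := cfQ_mul_cfDelta_add (θ := θ) (a := a) 0
  simp only [cfDelta_zero, cfQ, Nat.cast_one, one_mul] at h ⊢
  have hA : Int.fract w < (a 1 + 1) * θ := by
    linarith [Int.fract_lt_one w, cfDelta_succ_lt hcf 0, cfDelta_zero (θ := θ) (a := a)]
  obtain ⟨j, hj, hfr⟩ := exists_le_fract_sub_mul_lt (Int.fract_nonneg w) hcf.pos hA
  exact ⟨j, Nat.lt_succ_of_le hj, by rwa [← fract_fract_sub]⟩

theorem Covers.succ_of_odd (hcf : IsCF θ a) {n : ℕ} (hn : Odd n)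
    (h : Covers θ (cfDelta θ a n) (cfQ a (n + 1) + cfQ a n)) :
    Covers θ (cfDelta θ a (n + 1)) (cfQ a (n + 2) + cfQ a (n + 1)) := by
  intro w
  obtain ⟨m, hm, hy⟩ := h w
  have hη := cfDelta_pos hcf (n + 1)
  have hA : Int.fract (w - m * θ) < (a (n + 2) + 1) * cfDelta θ a (n + 1) := by
    linarith [cfDelta_add_two (θ := θ) (a := a) n, cfDelta_succ_lt hcf (n + 1)]
  obtain ⟨j, hj, hfr⟩ := exists_le_fract_sub_mul_lt (Int.fract_nonneg _) hη hA
  refine ⟨m + j * cfQ a (n + 1), ?_, ?_⟩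
  · rw [cfQ_add_two]; nlinarith
  · rwa [fract_sub_mul_add_cfQ_mul, cfErr_eq, hn.add_one.neg_one_pow, one_mul]

theorem Covers.succ_of_even (hcf : IsCF θ a) {n : ℕ} (hn : Even n)
    (h : Covers θ (cfDelta θ a n) (cfQ a (n + 1) + cfQ a n)) :
    Covers θ (cfDelta θ a (n + 1)) (cfQ a (n + 2) + cfQ a (n + 1)) := by
  intro w
  set η := cfDelta θ a (n + 1)
  have hη := cfDelta_pos hcf (n + 1)
  have hrec := cfDelta_add_two (θ := θ) (a := a) n
  have hδ'' := cfDelta_pos hcf (n + 2)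
  have hc : 0 < a (n + 2) * η := mul_pos (by exact_mod_cast hcf.2.1 (n + 2) (by omega)) hη
  obtain ⟨m, hm, hy⟩ := h (w - (1 - a (n + 2) * η))
  rw [sub_right_comm, ← fract_fract_sub] at hy
  set y := Int.fract (w - m * θ)
  have hy₀ : 0 ≤ y := Int.fract_nonneg _
  have hm' : m < cfQ a (n + 2) + cfQ a (n + 1) := by rw [cfQ_add_two]; nlinarith
  -- `y` lies in `[1 - a_{n+2} δ_{n+1}, 1) ∪ [0, δ_{n+2})`, and adding `q_{n+1}` to `m` moves it
  -- up by `δ_{n+1}`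
  rcases le_or_gt (1 - a (n + 2) * η) y with hyc | hyc
  · obtain ⟨j, hj, hfr⟩ := exists_le_fract_add_mul_lt (Int.fract_lt_one _) hη hyc
    refine ⟨m + j * cfQ a (n + 1), ?_, ?_⟩
    · rw [cfQ_add_two]; nlinarith
    · rwa [fract_sub_mul_add_cfQ_mul, cfErr_eq, hn.add_one.neg_one_pow, neg_one_mul, mul_neg,
        sub_neg_eq_add]
  · rw [fract_eq_add_one (by linarith [cfDelta_le hcf n, hcf.lt_one]) (by linarith)] at hy
    exact ⟨m, hm', by linarith [cfDelta_succ_lt hcf (n + 1)]⟩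

theorem covers (hcf : IsCF θ a) (n : ℕ) :
    Covers θ (cfDelta θ a n) (cfQ a (n + 1) + cfQ a n) := by
  induction n with
  | zero => exact covers_zero hcf
  | succ n ih =>
    rcases Nat.even_or_odd n with hn | hn
    · exact ih.succ_of_even hcf hn
    · exact ih.succ_of_odd hcf hn

end Covering

section RotationCoding

variable {θ : ℝ}

noncomputable def orbitPt (θ : ℝ) (m : ℕ) : ℝ := Int.fract (-(θ * m))

theorem rotWord_eq_decide (h₀ : 0 ≤ θ) (h₁ : θ ≤ 1) (m : ℕ) :
    rotWord θ m = decide (orbitPt θ m < θ) := by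
  have hpt : orbitPt θ m = ⌈θ * m⌉ - θ * m := by
    rw [orbitPt, Int.fract, Int.floor_neg]; push_cast; ring
  have hlo : ⌈θ * m⌉ ≤ ⌈θ * m + θ⌉ := Int.ceil_le_ceil (by linarith)
  have hhi : ⌈θ * m + θ⌉ ≤ ⌈θ * m⌉ + 1 :=
    (Int.ceil_le_ceil (by linarith)).trans_eq (Int.ceil_add_one _)
  have hiff : ⌈θ * (m + 1)⌉ - ⌈θ * m⌉ = 1 ↔ orbitPt θ m < θ := by
    rw [hpt, mul_add_one]
    constructor
    · intro h
      have := Int.lt_ceil.1 (show ⌈θ * m⌉ < ⌈θ * m + θ⌉ by omega)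
      linarith
    · intro h
      have := Int.lt_ceil.2 (show (⌈θ * m⌉ : ℝ) < θ * m + θ by linarith)
      omega
  simp only [rotWord, hiff]
  rfl

theorem orbitPt_add (θ : ℝ) (m d : ℕ) : orbitPt θ (m + d) = Int.fract (orbitPt θ m - d * θ) := by
  rw [orbitPt, orbitPt, fract_fract_sub]
  push_cast
  ring_nf

theorem orbitPt_add_cfQ {a : ℕ → ℕ} (m k : ℕ) :
    orbitPt θ (m + cfQ a k) = Int.fract (orbitPt θ m - cfErr θ a k) := by
  rw [orbitPt_add, cfErr, ← Int.fract_add_intCast _ (cfP a k)]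
  push_cast
  ring_nf

theorem orbitPt_sub_orbitPt (θ : ℝ) {m m' : ℕ} (h : m ≤ m') :
    ∃ P : ℤ, orbitPt θ m - orbitPt θ m' = ((m' - m : ℕ) : ℝ) * θ - P :=
  ⟨⌊-(θ * m)⌋ - ⌊-(θ * m')⌋, by rw [orbitPt, orbitPt, Int.fract, Int.fract]; push_cast [h]; ring⟩

end RotationCoding

section Language

def window (x : ℕ → Bool) (m n : ℕ) : List Bool := (List.range n).map fun i => x (m + i)

variable {x : ℕ → Bool}

@[simp] theorem length_window (m n : ℕ) : (window x m n).length = n := by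
  simp [window]

@[simp] theorem getElem_window {m n i : ℕ} (h : i < (window x m n).length) :
    (window x m n)[i] = x (m + i) := by
  simp [window]

theorem window_add (m p q : ℕ) : window x m (p + q) = window x m p ++ window x (m + p) q := by
  simp only [window, List.range_add, List.map_append, List.map_map]
  congr 1
  exact List.map_congr_left fun i _ => by simp [Nat.add_assoc]

theorem window_infix_window {t j n K : ℕ} (h : j + n ≤ K) :
    window x (t + j) n <:+: window x t K := by
  refine ⟨window x t j, window x (t + j + n) (K - (j + n)), ?_⟩
  rw [← window_add, Nat.add_assoc t j n, ← window_add, Nat.add_sub_cancel' h]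

theorem exists_eq_window_of_infix {u : List Bool} {s M : ℕ} (h : u <:+: window x s M) :
    ∃ i, i + u.length ≤ M ∧ u = window x (s + i) u.length := by
  obtain ⟨l₁, l₂, hl⟩ := h
  have hlen := congrArg List.length hl
  simp only [List.length_append, length_window] at hlen
  refine ⟨l₁.length, by omega, List.ext_getElem (by simp) fun i h₁ h₂ => ?_⟩
  have := List.getElem_of_eq hl (by simp; omega : l₁.length + i < (l₁ ++ u ++ l₂).length)
  rw [getElem_window, Nat.add_assoc]
  rw [getElem_window] at this
  rw [← this, List.getElem_append_left (by simp; omega), List.getElem_append_right (by omega)]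
  simp

theorem take_mem_Lang {Y : Set (ℕ → Bool)} {W : List Bool} (hW : W ∈ Lang Y) (r : ℕ) :
    W.take r ∈ Lang Y := by
  obtain ⟨y, hy, k, hk⟩ := hW
  refine ⟨y, hy, k, List.ext_getElem (by simp) fun i h₁ h₂ => ?_⟩
  rw [List.getElem_take, List.getElem_of_eq hk]
  simp

theorem isOpen_setOf_forall_lt_eq (N : ℕ) (x : ℕ → Bool) :
    IsOpen {y : ℕ → Bool | ∀ i < N, y i = x i} := by
  have h : {y : ℕ → Bool | ∀ i < N, y i = x i}
      = ⋂ i ∈ Finset.range N, (fun y => y i) ⁻¹' {x i} := by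
    ext y; simp
  rw [h]
  exact isOpen_biInter_finset fun i _ => (isOpen_discrete _).preimage (continuous_apply i)

theorem iterate_shiftMap_apply (k n : ℕ) : shiftMap^[k] x n = x (n + k) := by
  induction k generalizing x with
  | zero => rfl
  | succ k ih => rw [Function.iterate_succ_apply, ih]; rfl

theorem mem_Lang_orbit_closure_iff {w : List Bool} :
    w ∈ Lang (closure {y | ∃ k, y = shiftMap^[k] x}) ↔ ∃ m, w = window x m w.length := by
  constructor
  · rintro ⟨y, hy, k, hw⟩
    obtain ⟨_, hz, j, rfl⟩ := mem_closure_iff.1 hy _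
      (isOpen_setOf_forall_lt_eq (k + w.length) y) fun _ _ => rfl
    refine ⟨k + j, hw.trans (List.map_congr_left fun i hi => ?_)⟩
    rw [← hz (k + i) (by simp at hi; omega), iterate_shiftMap_apply, Nat.add_right_comm]
  · rintro ⟨m, hm⟩
    exact ⟨x, subset_closure ⟨0, rfl⟩, m, hm⟩

theorem mem_Lang_sturmian_iff {θ : ℝ} {w : List Bool} :
    w ∈ Lang (sturmian θ) ↔ ∃ m, w = window (rotWord θ) m w.length :=
  mem_Lang_orbit_closure_iff

theorem window_mem_Lang_sturmian (θ : ℝ) (m n : ℕ) : window (rotWord θ) m n ∈ Lang (sturmian θ) :=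
  mem_Lang_sturmian_iff.2 ⟨m, by rw [length_window]⟩

end Language

section Repetitivity

variable {Y : Set (ℕ → Bool)}

theorem repFun_le {n r : ℕ}
    (h : ∀ W ∈ Lang Y, W.length = r → ∀ w ∈ Lang Y, w.length = n → w <:+: W) :
    repFun Y n ≤ r :=
  Nat.sInf_le h

theorem length_lt_repFun {n : ℕ}
    (hS : ∃ r, ∀ W ∈ Lang Y, W.length = r → ∀ w ∈ Lang Y, w.length = n → w <:+: W)
    {w V : List Bool} (hw : w ∈ Lang Y) (hwn : w.length = n) (hV : V ∈ Lang Y)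
    (hwV : ¬ w <:+: V) : V.length < repFun Y n := by
  by_contra! hle
  refine hwV ((Nat.sInf_mem hS (V.take (repFun Y n)) (take_mem_Lang hV _) ?_ w hw hwn).trans
    (List.take_prefix _ _).isInfix)
  exact List.length_take_of_le hle

end Repetitivity

section UpperBound

variable {θ : ℝ} {a : ℕ → ℕ}

theorem fract_sub_fract (x t : ℝ) : Int.fract (x - Int.fract t) = Int.fract (x - t) :=
  Int.fract_eq_fract.2 ⟨⌊t⌋, by rw [Int.fract]; ring⟩

theorem fract_fract_add (t s : ℝ) : Int.fract (Int.fract t + s) = Int.fract (t + s) :=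
  Int.fract_eq_fract.2 ⟨-⌊t⌋, by rw [Int.fract]; push_cast; ring⟩

/-- On `[0, 1)`, the indicator of `{x | fract (x - t) < θ}` can only jump at `t` and at
`fract (t + θ)`. -/
theorem fract_sub_lt_iff_of_no_cut {x y t θ : ℝ} (hx : 0 ≤ x) (hxy : x ≤ y) (hy : y < 1)
    (ht₀ : 0 ≤ t) (ht₁ : t < 1) (h₁ : ¬ (x < t ∧ t ≤ y))
    (h₂ : ¬ (x < Int.fract (t + θ) ∧ Int.fract (t + θ) ≤ y)) :
    Int.fract (x - t) < θ ↔ Int.fract (y - t) < θ := by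
  rcases le_or_gt t x with htx | hxt
  · rw [Int.fract_eq_self.2 ⟨by linarith, by linarith⟩,
      Int.fract_eq_self.2 ⟨by linarith, by linarith⟩]
    refine ⟨fun h => ?_, fun h => by linarith⟩
    by_contra! hθy
    exact h₂ (by rw [Int.fract_eq_self.2 ⟨by linarith, by linarith⟩]; constructor <;> linarith)
  · have hyt : y < t := not_le.1 fun hty => h₁ ⟨hxt, hty⟩
    rw [fract_eq_add_one (by linarith) (by linarith), fract_eq_add_one (by linarith) (by linarith)]
    refine ⟨fun h => ?_, fun h => by linarith⟩
    by_contra! hθy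
    have hcut : Int.fract (t + θ) = t + θ - 1 :=
      Int.fract_eq_iff.2 ⟨by linarith, by linarith, 1, by push_cast; ring⟩
    exact h₂ (by rw [hcut]; constructor <;> linarith)

theorem orbitPt_nonneg (θ : ℝ) (m : ℕ) : 0 ≤ orbitPt θ m := Int.fract_nonneg _

theorem orbitPt_lt_one (θ : ℝ) (m : ℕ) : orbitPt θ m < 1 := Int.fract_lt_one _

theorem window_rotWord_eq_of_no_cut (h₀ : 0 ≤ θ) (h₁ : θ ≤ 1) {m m' n : ℕ}
    (hle : orbitPt θ m ≤ orbitPt θ m')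
    (hcut : ∀ j ≤ n, ¬ (orbitPt θ m < Int.fract (j * θ) ∧ Int.fract (j * θ) ≤ orbitPt θ m')) :
    window (rotWord θ) m n = window (rotWord θ) m' n := by
  refine List.map_congr_left fun i hi => ?_
  have hi : i < n := List.mem_range.1 hi
  rw [rotWord_eq_decide h₀ h₁, rotWord_eq_decide h₀ h₁, orbitPt_add, orbitPt_add, decide_eq_decide,
    ← fract_sub_fract _ (i * θ), ← fract_sub_fract (orbitPt θ m') (i * θ)]
  refine fract_sub_lt_iff_of_no_cut (orbitPt_nonneg θ m) hle (orbitPt_lt_one θ m')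
    (Int.fract_nonneg _) (Int.fract_lt_one _) (hcut i hi.le) ?_
  rw [fract_fract_add, ← add_one_mul]
  exact_mod_cast hcut (i + 1) hi

theorem cfDelta_le_abs_fract_sub (hcf : IsCF θ a) {k i j : ℕ} (hi : i < cfQ a (k + 1))
    (hj : j < cfQ a (k + 1)) (hij : i ≠ j) :
    cfDelta θ a k ≤ |Int.fract (i * θ) - Int.fract (j * θ)| := by
  have h := cfDelta_le_abs_sub hcf (n := k) (⌊i * θ⌋ - ⌊j * θ⌋) (d := i - j)
    (sub_ne_zero.2 (by exact_mod_cast hij)) (abs_sub_lt_iff.2 ⟨by omega, by omega⟩)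
  convert h using 2
  simp only [Int.fract]
  push_cast
  ring

theorem fract_le_one_sub_cfDelta (hcf : IsCF θ a) {k j : ℕ} (hj : j < cfQ a (k + 1)) :
    Int.fract (j * θ) ≤ 1 - cfDelta θ a k := by
  rcases Nat.eq_zero_or_pos j with rfl | hj₀
  · simp only [Nat.cast_zero, zero_mul, Int.fract_zero]
    linarith [cfDelta_le hcf k, hcf.lt_one]
  · have h := cfDelta_le_abs_sub hcf (n := k) (⌊j * θ⌋ + 1) (d := j) (by exact_mod_cast hj₀.ne')
      (by rw [abs_of_nonneg (by positivity)]; exact_mod_cast hj)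
    rw [abs_of_neg (by push_cast; linarith [Int.lt_floor_add_one ((j : ℝ) * θ)])] at h
    rw [Int.fract]
    push_cast at h
    linarith

/-- Move `x_{t+j}` into the arc of length `δ_k` starting at the largest cut point `{iθ} ≤ x_u`,
`i ≤ n`; no other cut point lies that close. -/
theorem exists_window_eq (hcf : IsCF θ a) {k n : ℕ} (hn : n < cfQ a (k + 1)) (u t : ℕ) :
    ∃ j < cfQ a (k + 1) + cfQ a k, window (rotWord θ) (t + j) n = window (rotWord θ) u n := by
  have h₀ := hcf.pos.le
  have h₁ := hcf.lt_one.le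
  obtain ⟨i₀, hi₀, hmax⟩ := Finset.exists_max_image
    ((Finset.range (n + 1)).filter fun i : ℕ => Int.fract (i * θ) ≤ orbitPt θ u)
    (fun i : ℕ => Int.fract (i * θ)) ⟨0, by simp [orbitPt_nonneg]⟩
  simp only [Finset.mem_filter, Finset.mem_range] at hi₀ hmax
  set l := Int.fract (i₀ * θ)
  obtain ⟨j, hj, hfr⟩ := covers hcf k (-(θ * t) - l)
  have hx : Int.fract (orbitPt θ (t + j) - l) < cfDelta θ a k := by
    rw [orbitPt, fract_fract_sub]
    convert hfr using 2
    push_cast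
    ring
  have hlx : l ≤ orbitPt θ (t + j) := by
    by_contra! h
    have h₀ := orbitPt_nonneg θ (t + j)
    rw [fract_eq_add_one (by linarith [Int.fract_lt_one (i₀ * θ)]) (by linarith)] at hx
    linarith [fract_le_one_sub_cfDelta hcf (k := k) (j := i₀) (by omega)]
  rw [Int.fract_eq_self.2 ⟨by linarith,
    by linarith [orbitPt_lt_one θ (t + j), Int.fract_nonneg (i₀ * θ)]⟩] at hx
  refine ⟨j, hj, ?_⟩
  rcases le_total (orbitPt θ (t + j)) (orbitPt θ u) with hxu | hux
  · refine window_rotWord_eq_of_no_cut h₀ h₁ hxu fun i hi ⟨hxi, hiu⟩ => ?_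
    linarith [hmax i ⟨by omega, hiu⟩]
  · refine (window_rotWord_eq_of_no_cut h₀ h₁ hux fun i hi ⟨hui, hix⟩ => ?_).symm
    have hne : i ≠ i₀ := by rintro rfl; linarith [hi₀.2]
    have h := cfDelta_le_abs_fract_sub hcf (k := k) (by omega) (by omega : i₀ < cfQ a (k + 1)) hne
    rw [abs_of_pos (by linarith [hi₀.2])] at h
    linarith

theorem infix_of_mem_Lang_sturmian (hcf : IsCF θ a) {k n : ℕ} (hn : n < cfQ a (k + 1)) :
    ∀ W ∈ Lang (sturmian θ), W.length = cfQ a (k + 1) + cfQ a k + n →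
      ∀ w ∈ Lang (sturmian θ), w.length = n → w <:+: W := by
  intro W hW hWl w hw hwl
  obtain ⟨t, hWt⟩ := mem_Lang_sturmian_iff.1 hW
  obtain ⟨u, hwu⟩ := mem_Lang_sturmian_iff.1 hw
  obtain ⟨j, hj, heq⟩ := exists_window_eq hcf hn u t
  rw [hWt, hwu, hWl, hwl, ← heq]
  exact window_infix_window (by omega)

theorem repFun_sturmian_le (hcf : IsCF θ a) {k n : ℕ} (hn : n < cfQ a (k + 1)) :
    repFun (sturmian θ) n ≤ cfQ a (k + 1) + cfQ a k + n :=
  repFun_le (infix_of_mem_Lang_sturmian hcf hn)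

end UpperBound

section LowerBound

variable {θ : ℝ} {a : ℕ → ℕ}

def IsPeriodBreak (θ : ℝ) (p m : ℕ) : Prop := rotWord θ m ≠ rotWord θ (m + p)

theorem isPeriodBreak_cfQ_iff (hcf : IsCF θ a) {k m : ℕ} :
    IsPeriodBreak θ (cfQ a k) m ↔
      ¬ (orbitPt θ m < θ ↔ Int.fract (orbitPt θ m - cfErr θ a k) < θ) := by
  rw [IsPeriodBreak, rotWord_eq_decide hcf.pos.le hcf.lt_one.le,
    rotWord_eq_decide hcf.pos.le hcf.lt_one.le, orbitPt_add_cfQ, Ne, decide_eq_decide]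

theorem crossing_fract_sub {x θ δ : ℝ} (hx₀ : 0 ≤ x) (hx₁ : x < 1) (hδ : 0 < δ) (hδθ : δ ≤ θ)
    (hθδ : θ + δ ≤ 1) :
    (x < δ → ¬ (x < θ ↔ Int.fract (x - δ) < θ)) ∧
      (¬ (x < θ ↔ Int.fract (x - δ) < θ) → x < δ ∨ Int.fract (x - θ) < δ) := by
  refine ⟨fun h hiff => ?_, fun h => ?_⟩
  · rw [fract_eq_add_one (by linarith) (by linarith)] at hiff
    linarith [hiff.1 (by linarith)]
  · by_contra! hfar
    obtain ⟨hxδ, hxθ⟩ := hfar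
    rw [Int.fract_eq_self.2 ⟨by linarith, by linarith⟩] at h
    refine h ⟨fun _ => by linarith, fun hlt => ?_⟩
    by_contra! hθx
    rw [Int.fract_eq_self.2 ⟨by linarith, by linarith⟩] at hxθ
    linarith

theorem crossing_fract_add {x θ δ : ℝ} (hx₀ : 0 ≤ x) (hx₁ : x < 1) (hδ : 0 < δ) (hδθ : δ ≤ θ)
    (hθδ : θ + δ ≤ 1) :
    (Int.fract (x + δ) < δ → ¬ (x < θ ↔ Int.fract (x + δ) < θ)) ∧
      (¬ (x < θ ↔ Int.fract (x + δ) < θ) → Int.fract (x + δ) < δ ∨ Int.fract (x - θ + δ) < δ) := by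
  refine ⟨fun h hiff => ?_, fun h => ?_⟩
  · have hx : 1 ≤ x + δ := by
      by_contra! hx
      rw [Int.fract_eq_self.2 ⟨by linarith, hx⟩] at h
      linarith
    exact absurd (hiff.2 (by linarith)) (by linarith)
  · by_contra! hfar
    obtain ⟨hxδ, hxθ⟩ := hfar
    have hx : x + δ < 1 := by
      by_contra! hx
      rw [← Int.fract_sub_one, Int.fract_eq_self.2 ⟨by linarith, by linarith⟩] at hxδ
      linarith
    rw [Int.fract_eq_self.2 ⟨by linarith, hx⟩] at h
    refine h ⟨fun hlt => ?_, fun _ => by linarith⟩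
    by_contra! hθx
    rw [Int.fract_eq_self.2 ⟨by linarith, by linarith⟩] at hxθ
    linarith

/-- The breaks of the period `q_k` lie in two arcs of length `δ_k`, translates of each other by
`θ`, and the first arc consists of breaks. -/
theorem exists_periodBreak_arcs (hcf : IsCF θ a) {k : ℕ} (hk : 1 ≤ k) :
    ∃ s : ℝ, ∀ m,
      (Int.fract (orbitPt θ m - s) < cfDelta θ a k → IsPeriodBreak θ (cfQ a k) m) ∧
      (IsPeriodBreak θ (cfQ a k) m →
        ∃ e : ℕ, e ≤ 1 ∧ Int.fract (orbitPt θ m - e * θ - s) < cfDelta θ a k) := by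
  have hδ := cfDelta_pos hcf k
  have hδθ := cfDelta_le hcf k
  have hθδ := add_cfDelta_le_one hcf hk
  have hx := fun m => Int.fract_eq_self.2 ⟨orbitPt_nonneg θ m, orbitPt_lt_one θ m⟩
  rcases Nat.even_or_odd k with hke | hko
  · have hE : cfErr θ a k = cfDelta θ a k := by rw [cfErr_eq, hke.neg_one_pow, one_mul]
    refine ⟨0, fun m => ?_⟩
    obtain ⟨h₁, h₂⟩ := crossing_fract_sub (orbitPt_nonneg θ m) (orbitPt_lt_one θ m) hδ hδθ hθδ
    simp only [isPeriodBreak_cfQ_iff hcf, hE, sub_zero, hx]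
    refine ⟨h₁, fun hb => (h₂ hb).elim (fun h => ⟨0, zero_le_one, by simpa [hx]⟩)
      (fun h => ⟨1, le_rfl, by simpa⟩)⟩
  · have hE : cfErr θ a k = -cfDelta θ a k := by rw [cfErr_eq, hko.neg_one_pow, neg_one_mul]
    refine ⟨-cfDelta θ a k, fun m => ?_⟩
    obtain ⟨h₁, h₂⟩ := crossing_fract_add (orbitPt_nonneg θ m) (orbitPt_lt_one θ m) hδ hδθ hθδ
    simp only [isPeriodBreak_cfQ_iff hcf, hE, sub_neg_eq_add]
    refine ⟨h₁, fun hb => (h₂ hb).elim (fun h => ⟨0, zero_le_one, by simpa⟩)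
      (fun h => ⟨1, le_rfl, by simpa⟩)⟩

theorem exists_abs_sub_sub_lt_of_fract_lt {A B δ : ℝ} (hA : Int.fract A < δ)
    (hB : Int.fract B < δ) : ∃ Z : ℤ, |A - B - Z| < δ := by
  refine ⟨⌊A⌋ - ⌊B⌋, abs_lt.2 ⟨?_, ?_⟩⟩ <;>
  · push_cast
    linarith [Int.fract_nonneg A, Int.fract_nonneg B, Int.self_sub_floor A, Int.self_sub_floor B]

theorem periodBreak_gap (hcf : IsCF θ a) {k m m' : ℕ} (hk : 1 ≤ k) (hmm' : m < m')
    (hb : IsPeriodBreak θ (cfQ a k) m) (hb' : IsPeriodBreak θ (cfQ a k) m') :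
    m' = m + 1 ∨ m + cfQ a (k + 1) ≤ m' + 1 := by
  obtain ⟨s, hs⟩ := exists_periodBreak_arcs hcf hk
  obtain ⟨e, he, hX⟩ := (hs m).2 hb
  obtain ⟨e', he', hX'⟩ := (hs m').2 hb'
  obtain ⟨P, hP⟩ := orbitPt_sub_orbitPt θ hmm'.le
  obtain ⟨Z, hZ⟩ := exists_abs_sub_sub_lt_of_fract_lt hX hX'
  set d : ℤ := (m' - m : ℕ) + e' - e
  have hclose : |d * θ - ((P + Z : ℤ) : ℝ)| < cfDelta θ a k := by
    convert hZ using 2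
    simp only [d]
    push_cast
    linarith
  by_cases hd : d = 0
  · left; omega
  · right
    have hdq : cfQ a (k + 1) ≤ |d| :=
      not_lt.1 fun h => (cfDelta_le_abs_sub hcf _ hd h).not_gt hclose
    rw [abs_of_nonneg (by omega)] at hdq
    omega

theorem exists_periodBreak_ge (hcf : IsCF θ a) {k : ℕ} (hk : 1 ≤ k) (t : ℕ) :
    ∃ m, t ≤ m ∧ IsPeriodBreak θ (cfQ a k) m := by
  obtain ⟨s, hs⟩ := exists_periodBreak_arcs hcf hk
  obtain ⟨j, -, hj⟩ := covers hcf k (-(θ * t) - s)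
  refine ⟨t + j, Nat.le_add_right t j, (hs _).1 ?_⟩
  rw [orbitPt, fract_fract_sub]
  convert hj using 2
  push_cast
  ring

theorem exists_long_run_not_periodBreak (hcf : IsCF θ a) {k : ℕ} (hk : 1 ≤ k) :
    ∃ s b : ℕ, s + cfQ a (k + 1) ≤ b + 3 ∧ IsPeriodBreak θ (cfQ a k) b ∧
      ∀ m, s ≤ m → m < b → ¬ IsPeriodBreak θ (cfQ a k) m := by
  classical
  obtain ⟨b₁, -, hb₁⟩ := exists_periodBreak_ge hcf hk 0
  have hex := exists_periodBreak_ge hcf hk (b₁ + 2)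
  obtain ⟨hge, hb⟩ := Nat.find_spec hex
  refine ⟨b₁ + 2, Nat.find hex, ?_, hb, fun m hm hmb hbm => Nat.find_min hex hmb ⟨hm, hbm⟩⟩
  rcases periodBreak_gap hcf hk (by omega) hb₁ hb with h | h <;> omega

/-- The factor of length `q_k + 1` at a break of the period `q_k` does not occur in a
`q_k`-periodic stretch, and such stretches of length almost `q_{k+1} + q_k` exist. -/
theorem cfQ_add_le_repFun (hcf : IsCF θ a) {k : ℕ} (hk : 1 ≤ k) :
    cfQ a (k + 1) + cfQ a k ≤ repFun (sturmian θ) (cfQ a k + 1) + 2 := by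
  obtain ⟨s, b, hsb, hb, hgood⟩ := exists_long_run_not_periodBreak hcf hk
  have hlt := length_lt_repFun ⟨_, infix_of_mem_Lang_sturmian hcf (k := cfQ a k + 2)
      (n := cfQ a k + 1) (le_cfQ_succ hcf.2.1 (cfQ a k + 2))⟩
    (window_mem_Lang_sturmian θ b (cfQ a k + 1)) (length_window _ _)
    (window_mem_Lang_sturmian θ s (b - s + cfQ a k)) ?_
  · rw [length_window] at hlt
    omega
  · intro hinf
    obtain ⟨i, hi, heq⟩ := exists_eq_window_of_infix hinf
    rw [length_window] at hi heq
    have h₀ := List.getElem_of_eq heq (i := 0) (by simp)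
    have h₁ := List.getElem_of_eq heq (i := cfQ a k) (by simp)
    simp only [getElem_window, Nat.add_zero] at h₀ h₁
    exact hb (by rw [h₀, h₁]; exact not_not.1 (hgood (s + i) (by omega) (by omega)))

end LowerBound

section Asymptotics

variable {θ : ℝ} {a : ℕ → ℕ}

theorem exists_cfQ_le_lt (ha : ∀ n, 1 ≤ n → 1 ≤ a n) {n : ℕ} (hn : 1 ≤ n) :
    ∃ k, cfQ a k ≤ n ∧ n < cfQ a (k + 1) := by
  classical
  have hex : ∃ K, n < cfQ a K := ⟨n + 2, le_cfQ_succ ha (n + 1)⟩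
  obtain ⟨k, hk⟩ : ∃ k, Nat.find hex = k + 1 :=
    Nat.exists_eq_succ_of_ne_zero fun h => by
      have h₀ := Nat.find_spec hex
      rw [h, cfQ] at h₀
      omega
  exact ⟨k, not_lt.1 (Nat.find_min hex (by omega)), hk ▸ Nat.find_spec hex⟩

theorem repFun_sturmian_le_rpow (hcf : IsCF θ a) {α c : ℝ} (hα : 1 ≤ α) (hc : 0 ≤ c)
    (hbound : ∀ m : ℕ, (a (m + 1) : ℝ) ≤ c * (cfQ a m : ℝ) ^ (α - 1)) {n : ℕ} (hn : 1 ≤ n) :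
    (repFun (sturmian θ) n : ℝ) ≤ (2 * c + 3) * (n : ℝ) ^ α := by
  obtain ⟨k, hkn, hnk⟩ := exists_cfQ_le_lt hcf.2.1 hn
  have hq : (0 : ℝ) < cfQ a k := by exact_mod_cast cfQ_pos hcf.2.1 k
  have hqn : (cfQ a k : ℝ) ≤ n := by exact_mod_cast hkn
  have hR : (repFun (sturmian θ) n : ℝ) ≤ a (k + 1) * cfQ a k + qext a k + cfQ a k + n := by
    exact_mod_cast (repFun_sturmian_le hcf hnk).trans_eq (by rw [cfQ_succ_eq])
  have hqext : (qext a k : ℝ) ≤ cfQ a k := by exact_mod_cast qext_le_cfQ hcf.2.1 k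
  have haq : (a (k + 1) : ℝ) * cfQ a k ≤ c * (n : ℝ) ^ α :=
    calc (a (k + 1) : ℝ) * cfQ a k ≤ c * (cfQ a k : ℝ) ^ (α - 1) * cfQ a k :=
          mul_le_mul_of_nonneg_right (hbound k) hq.le
      _ = c * (cfQ a k : ℝ) ^ α := by rw [mul_assoc, ← Real.rpow_add_one hq.ne', sub_add_cancel]
      _ ≤ c * (n : ℝ) ^ α := by gcongr
  have hn' : (n : ℝ) ≤ (n : ℝ) ^ α := by
    simpa using Real.rpow_le_rpow_of_exponent_le (by exact_mod_cast hn : (1 : ℝ) ≤ n) hα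
  nlinarith [Real.rpow_nonneg (Nat.cast_nonneg (α := ℝ) n) α]

theorem natCast_rpow_eq_ofReal {n : ℕ} (hn : 0 < n) (x : ℝ) :
    (n : ENNReal) ^ x = ENNReal.ofReal ((n : ℝ) ^ x) := by
  rw [← ENNReal.ofReal_natCast, ENNReal.ofReal_rpow_of_pos (by exact_mod_cast hn)]

theorem natCast_div_rpow_eq_ofReal (m : ℕ) {n : ℕ} (hn : 0 < n) (x : ℝ) :
    (m : ENNReal) / (n : ENNReal) ^ x = ENNReal.ofReal (m / (n : ℝ) ^ x) := by
  rw [natCast_rpow_eq_ofReal hn, ← ENNReal.ofReal_natCast m,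
    ← ENNReal.ofReal_div_of_pos (Real.rpow_pos_of_pos (by exact_mod_cast hn) x)]

theorem Ralpha_sturmian_le (hcf : IsCF θ a) {α c : ℝ} (hα : 1 ≤ α) (hc : 0 ≤ c)
    (hbound : ∀ m : ℕ, (a (m + 1) : ℝ) ≤ c * (cfQ a m : ℝ) ^ (α - 1)) :
    Ralpha (sturmian θ) α ≤ ENNReal.ofReal (2 * c + 3) := by
  refine limsup_le_of_le (by isBoundedDefault) ?_
  filter_upwards [eventually_ge_atTop 1] with n hn
  rw [natCast_div_rpow_eq_ofReal _ hn]
  refine ENNReal.ofReal_le_ofReal ((div_le_iff₀ (Real.rpow_pos_of_pos ?_ α)).2 ?_)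
  · exact_mod_cast hn
  · exact repFun_sturmian_le_rpow hcf hα hc hbound hn

theorem mul_cfQ_le_repFun (hcf : IsCF θ a) {k : ℕ} (hk : 1 ≤ k) :
    a (k + 1) * cfQ a k ≤ repFun (sturmian θ) (cfQ a k + 1) := by
  obtain ⟨j, rfl⟩ := Nat.exists_eq_add_of_le' hk
  have h := cfQ_add_le_repFun hcf hk
  rw [cfQ_succ_eq] at h
  have : 0 < qext a (j + 1) := cfQ_pos hcf.2.1 j
  have := cfQ_pos hcf.2.1 (j + 1)
  omega

theorem rpow_one_sub_le_of_mul_le {Q A R α : ℝ} (hQ : 0 < Q) (hAR : A * Q ≤ R) :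
    A * Q ^ (1 - α) ≤ (Q / (Q + 1)) ^ (-α) * (R / (Q + 1) ^ α) := by
  have e₁ : Q ^ (1 - α) = Q / Q ^ α := by rw [Real.rpow_sub hQ, Real.rpow_one]
  have e₂ : (Q / (Q + 1)) ^ (-α) * (R / (Q + 1) ^ α) = R / Q ^ α := by
    rw [Real.rpow_neg (by positivity), Real.div_rpow hQ.le (by positivity)]
    field_simp
  rw [e₁, e₂, ← mul_div_assoc]
  exact div_le_div_of_nonneg_right hAR (by positivity)

/-- Along `n = q_k + 1` we have `R(n) ≥ a_{k+1} q_k`, and `n ~ q_k`. -/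
theorem Acf_le_Ralpha_sturmian (hcf : IsCF θ a) (α : ℝ) : Acf a α ≤ Ralpha (sturmian θ) α := by
  set g : ℕ → ENNReal := fun k =>
    (repFun (sturmian θ) (cfQ a k + 1) : ENNReal) / ((cfQ a k + 1 : ℕ) : ENNReal) ^ α
  set u : ℕ → ENNReal := fun k => ENNReal.ofReal (((cfQ a k : ℝ) / (cfQ a k + 1)) ^ (-α))
  have hq := tendsto_cfQ_atTop hcf.2.1
  have hu : Tendsto u atTop (𝓝 1) := by
    have h := ((tendsto_natCast_div_add_atTop (1 : ℝ)).comp hq).rpow_const (p := -α)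
      (Or.inl one_ne_zero)
    simpa using ENNReal.tendsto_ofReal h
  have hfg : ∀ᶠ k in atTop, (a (k + 1) : ENNReal) * (cfQ a k : ENNReal) ^ (1 - α) ≤ (u * g) k := by
    filter_upwards [eventually_ge_atTop 1] with k hk
    have hQ := cfQ_pos hcf.2.1 k
    have hR : (a (k + 1) : ℝ) * cfQ a k ≤ repFun (sturmian θ) (cfQ a k + 1) := by
      exact_mod_cast mul_cfQ_le_repFun hcf hk
    rw [Pi.mul_apply, show g k = _ from natCast_div_rpow_eq_ofReal _ (Nat.succ_pos _) α,
      natCast_rpow_eq_ofReal hQ,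
      ← ENNReal.ofReal_natCast (a (k + 1)), ← ENNReal.ofReal_mul (Nat.cast_nonneg _),
      ← ENNReal.ofReal_mul (by positivity)]
    refine ENNReal.ofReal_le_ofReal ?_
    push_cast
    exact rpow_one_sub_le_of_mul_le (by exact_mod_cast hQ) hR
  have hg : limsup g atTop ≤ Ralpha (sturmian θ) α :=
    Tendsto.limsup_comp_le_limsup
      (u := fun n : ℕ => (repFun (sturmian θ) n : ENNReal) / (n : ENNReal) ^ α)
      ((tendsto_add_atTop_nat 1).comp hq)
  calc Acf a α ≤ limsup (u * g) atTop := limsup_le_limsup hfg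
    _ ≤ limsup u atTop * limsup g atTop := by
      refine ENNReal.limsup_mul_le' ?_ ?_ <;> simp [hu.limsup_eq]
    _ = limsup g atTop := by rw [hu.limsup_eq, one_mul]
    _ ≤ Ralpha (sturmian θ) α := hg

end Asymptotics

/-- if `A_α(θ) < ∞`, witnessed by `c > 1` with `a_{m+1} ≤ c q_m^{α-1}`,
then `R_α < ∞`, `R_α ≥ A_α(θ)`, `R(n) ≤ (2c+3) n^α`, and if moreover `A_α(θ) > 0`
then `R_α > 0` (α-repetitivity). -/
theorem stmt9 (θ : ℝ) (a : ℕ → ℕ) (α : ℝ) (hα : 1 < α) (hcf : IsCF θ a)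
    (c : ℝ) (hc : 1 < c)
    (hbound : ∀ m : ℕ, (a (m+1) : ℝ) ≤ c * (cfQ a m : ℝ) ^ (α - 1)) :
    Ralpha (sturmian θ) α < ⊤ ∧
    Acf a α ≤ Ralpha (sturmian θ) α ∧
    (0 < Acf a α → 0 < Ralpha (sturmian θ) α) ∧
    (∀ n : ℕ, 1 ≤ n → (repFun (sturmian θ) n : ℝ) ≤ (2*c+3) * (n : ℝ) ^ α) := by
  have hc₀ : 0 ≤ c := by linarith
  have hA := Acf_le_Ralpha_sturmian hcf α
  exact ⟨(Ralpha_sturmian_le hcf hα.le hc₀ hbound).trans_lt ENNReal.ofReal_lt_top, hA,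
    fun h => h.trans_le hA, fun n hn => repFun_sturmian_le_rpow hcf hα.le hc₀ hbound hn⟩

end CFPaper
end
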